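/- Let N ≥ 1 be a natural number and let D = D_{N-1} ∘ D_{N-2} ∘ ··· ∘ D₁ ∘ D₀ be the composition of the lowering operators D₀, …, D_{N-1}. Then for every smooth ψ : ℂ → ℂ one has L_N(Dψ) = D(L₀ψ), where L₀ψ = -(1+|z|²)²∂(∂̄ψ) is (minus) the Laplace–Beltrami operator of the round sphere in stereographic coordinates. Consequently the Dirac monopole operator H_{2N} = L_N - N² satisfies H_{2N}∘D = D∘(L₀ - N²). -/

import Mathlib

open Complex ComplexConjugate MeasureTheory

noncomputable section

/-- Partial derivative in the x-direction (identifying ℂ with ℝ²). -/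
def pdx (f : ℂ → ℂ) (z : ℂ) : ℂ := fderiv ℝ f z 1

/-- Partial derivative in the y-direction. -/
def pdy (f : ℂ → ℂ) (z : ℂ) : ℂ := fderiv ℝ f z Complex.I

/-- Wirtinger derivative ∂ = (∂ₓ - i ∂_y)/2. -/
def wd (f : ℂ → ℂ) (z : ℂ) : ℂ := (pdx f z - Complex.I * pdy f z) / 2

/-- Wirtinger derivative ∂̄ = (∂ₓ + i ∂_y)/2. -/
def wdb (f : ℂ → ℂ) (z : ℂ) : ℂ := (pdx f z + Complex.I * pdy f z) / 2

/-- Lowering operator D_N ψ = (1+|z|²)∂̄ψ + Nzψ. -/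
def DN (N : ℝ) (ψ : ℂ → ℂ) (z : ℂ) : ℂ :=
  (1 + z * conj z) * wdb ψ z + (N : ℂ) * z * ψ z

/-- Raising operator D_N* ψ = -(1+|z|²)∂ψ + (N+1)z̄ψ. -/
def DNs (N : ℝ) (ψ : ℂ → ℂ) (z : ℂ) : ℂ :=
  -(1 + z * conj z) * wd ψ z + ((N : ℂ) + 1) * conj z * ψ z

/-- Dirac monopole operator
L_N ψ = -(1+|z|²)²∂∂̄ψ - Nz(1+|z|²)∂ψ + Nz̄(1+|z|²)∂̄ψ + N²(1+|z|²)ψ. -/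
def LN (N : ℝ) (ψ : ℂ → ℂ) (z : ℂ) : ℂ :=
  -(1 + z * conj z)^2 * wd (wdb ψ) z
    - (N : ℂ) * z * (1 + z * conj z) * wd ψ z
    + (N : ℂ) * conj z * (1 + z * conj z) * wdb ψ z
    + (N : ℂ)^2 * (1 + z * conj z) * ψ z

/-- The chain of lowering operators: `lowerChain N ψ = D_{N-1}(D_{N-2}(··· D₀(ψ)···))`. -/
def lowerChain : ℕ → (ℂ → ℂ) → ℂ → ℂ
  | 0, ψ => ψ
  | k + 1, ψ => fun z => DN (k : ℝ) (lowerChain k ψ) z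

/-- Minus the Laplace–Beltrami operator of the round sphere in stereographic
coordinates: L₀ψ = -(1+|z|²)²∂(∂̄ψ). -/
def L0 (ψ : ℂ → ℂ) (z : ℂ) : ℂ := -(1 + z * conj z)^2 * wd (wdb ψ) z

/-!
Each lowering operator intertwines consecutive monopole operators: `L_{k+1} ∘ D_k = D_k ∘ L_k`
on smooth functions. This is a direct computation with the Leibniz rule for the Wirtinger
derivatives, `∂z = ∂̄z̄ = 1`, `∂̄z = ∂z̄ = 0`, and `∂∂̄ = ∂̄∂` (symmetry of second derivatives).
Since `L_0 = L₀`, chaining these relations for `k = 0, …, N-1` gives `L_N ∘ D = D ∘ L₀`; the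
statement about `H_{2N}` follows because `D` is `ℂ`-linear on smooth functions.
-/

open scoped ContDiff

section Wirtinger

variable {f g : ℂ → ℂ} {z : ℂ}

lemma wd_add (hf : DifferentiableAt ℝ f z) (hg : DifferentiableAt ℝ g z) :
    wd (fun w => f w + g w) z = wd f z + wd g z := by
  simp only [wd, pdx, pdy, fderiv_fun_add hf hg, add_apply]
  ring

lemma wdb_add (hf : DifferentiableAt ℝ f z) (hg : DifferentiableAt ℝ g z) :
    wdb (fun w => f w + g w) z = wdb f z + wdb g z := by
  simp only [wdb, pdx, pdy, fderiv_fun_add hf hg, add_apply]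
  ring

lemma wdb_sub (hf : DifferentiableAt ℝ f z) (hg : DifferentiableAt ℝ g z) :
    wdb (fun w => f w - g w) z = wdb f z - wdb g z := by
  simp only [wdb, pdx, pdy, fderiv_fun_sub hf hg, sub_apply]
  ring

lemma wd_mul (hf : DifferentiableAt ℝ f z) (hg : DifferentiableAt ℝ g z) :
    wd (fun w => f w * g w) z = wd f z * g z + f z * wd g z := by
  simp only [wd, pdx, pdy, fderiv_fun_mul hf hg, add_apply, smul_apply, smul_eq_mul]
  ring

lemma wdb_mul (hf : DifferentiableAt ℝ f z) (hg : DifferentiableAt ℝ g z) :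
    wdb (fun w => f w * g w) z = wdb f z * g z + f z * wdb g z := by
  simp only [wdb, pdx, pdy, fderiv_fun_mul hf hg, add_apply, smul_apply, smul_eq_mul]
  ring

lemma wd_const (c : ℂ) : wd (fun _ => c) z = 0 := by
  simp [wd, pdx, pdy]

lemma wdb_const (c : ℂ) : wdb (fun _ => c) z = 0 := by
  simp [wdb, pdx, pdy]

lemma wd_id : wd (fun w => w) z = 1 := by
  simp [wd, pdx, pdy]

lemma wdb_id : wdb (fun w => w) z = 0 := by
  simp [wdb, pdx, pdy]

-- `fun w => c * w` is eta-reduced to `HMul.hMul c`, which `wd_mul` cannot match.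
lemma wd_const_mul_id (c : ℂ) : wd (fun w => c * w) z = c := by
  simpa [wd_const, wd_id] using wd_mul (differentiableAt_const c) (differentiableAt_fun_id (x := z))

lemma wdb_const_mul_id (c : ℂ) : wdb (fun w => c * w) z = 0 := by
  simpa [wdb_const, wdb_id] using wdb_mul (differentiableAt_const c) (differentiableAt_fun_id (x := z))

lemma fderiv_conj : fderiv ℝ (fun w : ℂ => conj w) z = conjCLE.toContinuousLinearMap :=
  conjCLE.fderiv

lemma wd_conj : wd (fun w => conj w) z = 0 := by
  simp [wd, pdx, pdy, fderiv_conj]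

lemma wdb_conj : wdb (fun w => conj w) z = 1 := by
  simp [wdb, pdx, pdy, fderiv_conj]

lemma fderiv_wd_apply (hx : DifferentiableAt ℝ (pdx f) z) (hy : DifferentiableAt ℝ (pdy f) z)
    (v : ℂ) : fderiv ℝ (wd f) z v = (fderiv ℝ (pdx f) z v - I * fderiv ℝ (pdy f) z v) / 2 := by
  change fderiv ℝ (fun w => (pdx f w - I * pdy f w) * 2⁻¹) z v = _
  simp (disch := fun_prop) only [fderiv_mul_const, fderiv_fun_sub, fderiv_const_mul, smul_apply,
    sub_apply, smul_eq_mul, div_eq_mul_inv]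
  ring

lemma fderiv_wdb_apply (hx : DifferentiableAt ℝ (pdx f) z) (hy : DifferentiableAt ℝ (pdy f) z)
    (v : ℂ) : fderiv ℝ (wdb f) z v = (fderiv ℝ (pdx f) z v + I * fderiv ℝ (pdy f) z v) / 2 := by
  change fderiv ℝ (fun w => (pdx f w + I * pdy f w) * 2⁻¹) z v = _
  simp (disch := fun_prop) only [fderiv_mul_const, fderiv_fun_add, fderiv_const_mul, smul_add,
    add_apply, smul_apply, smul_eq_mul, div_eq_mul_inv]
  ring

lemma pdx_pdy_comm (hf : ContDiffAt ℝ 2 f z) : pdx (pdy f) z = pdy (pdx f) z := by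
  have hdf : DifferentiableAt ℝ (fderiv ℝ f) z :=
    (hf.fderiv_right (m := 1) le_rfl).differentiableAt one_ne_zero
  change fderiv ℝ (fun w => fderiv ℝ f w I) z 1 = fderiv ℝ (fun w => fderiv ℝ f w 1) z I
  rw [fderiv_clm_apply hdf (differentiableAt_const _),
    fderiv_clm_apply hdf (differentiableAt_const _)]
  simpa using (hf.isSymmSndFDerivAt (by simp)).eq 1 I

lemma wdb_wd_comm (hf : ContDiffAt ℝ 2 f z) : wdb (wd f) z = wd (wdb f) z := by
  have hdf : DifferentiableAt ℝ (fderiv ℝ f) z :=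
    (hf.fderiv_right (m := 1) le_rfl).differentiableAt one_ne_zero
  have hx : DifferentiableAt ℝ (pdx f) z := hdf.clm_apply (differentiableAt_const _)
  have hy : DifferentiableAt ℝ (pdy f) z := hdf.clm_apply (differentiableAt_const _)
  have hxy : fderiv ℝ (pdy f) z 1 = fderiv ℝ (pdx f) z I := pdx_pdy_comm hf
  simp only [wd, wdb, pdx, pdy, fderiv_wd_apply hx hy, fderiv_wdb_apply hx hy, hxy]
  ring

end Wirtinger

@[fun_prop]
lemma contDiff_conj {n : WithTop ℕ∞} : ContDiff ℝ n (fun z : ℂ => conj z) :=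
  conjCLE.contDiff

@[fun_prop]
lemma differentiable_conj : Differentiable ℝ (fun z : ℂ => conj z) :=
  conjCLE.differentiable

section Smoothness

variable {f : ℂ → ℂ}

lemma ContDiff.fderiv_apply_const (hf : ContDiff ℝ ∞ f) (v : ℂ) :
    ContDiff ℝ ∞ (fun z => fderiv ℝ f z v) :=
  (hf.fderiv_right le_rfl).clm_apply contDiff_const

@[fun_prop]
lemma contDiff_wd (hf : ContDiff ℝ ∞ f) : ContDiff ℝ ∞ (wd f) :=
  ((hf.fderiv_apply_const 1).sub (contDiff_const.mul (hf.fderiv_apply_const I))).div_const 2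

@[fun_prop]
lemma contDiff_wdb (hf : ContDiff ℝ ∞ f) : ContDiff ℝ ∞ (wdb f) :=
  ((hf.fderiv_apply_const 1).add (contDiff_const.mul (hf.fderiv_apply_const I))).div_const 2

@[fun_prop]
lemma differentiable_wd (hf : ContDiff ℝ ∞ f) : Differentiable ℝ (wd f) :=
  (contDiff_wd hf).differentiable (by simp)

@[fun_prop]
lemma differentiable_wdb (hf : ContDiff ℝ ∞ f) : Differentiable ℝ (wdb f) :=
  (contDiff_wdb hf).differentiable (by simp)

lemma contDiff_DN (k : ℝ) (hf : ContDiff ℝ ∞ f) : ContDiff ℝ ∞ (DN k f) := by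
  change ContDiff ℝ ∞ fun z => (1 + z * conj z) * wdb f z + (k : ℂ) * z * f z
  fun_prop

lemma contDiff_lowerChain (hf : ContDiff ℝ ∞ f) (n : ℕ) : ContDiff ℝ ∞ (lowerChain n f) := by
  induction n with
  | zero => exact hf
  | succ n ih => exact contDiff_DN n ih

lemma contDiff_L0 (hf : ContDiff ℝ ∞ f) : ContDiff ℝ ∞ (L0 f) := by
  change ContDiff ℝ ∞ fun z => -(1 + z * conj z) ^ 2 * wd (wdb f) z
  fun_prop

end Smoothness

section Intertwining

variable {φ : ℂ → ℂ} (hφ : ContDiff ℝ ∞ φ) (k : ℝ) (z : ℂ)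
include hφ

lemma wdb_DN : wdb (DN k φ) z = (k + 1) * z * wdb φ z + (1 + z * conj z) * wdb (wdb φ) z := by
  have := hφ.differentiable (by simp)
  change wdb (fun w => (1 + w * conj w) * wdb φ w + (k : ℂ) * w * φ w) z = _
  simp (disch := fun_prop) only [wdb_add, wdb_mul, wdb_id, wdb_conj, wdb_const, wdb_const_mul_id]
  ring

lemma wd_DN : wd (DN k φ) z =
    conj z * wdb φ z + (1 + z * conj z) * wd (wdb φ) z + k * φ z + k * z * wd φ z := by
  have := hφ.differentiable (by simp)
  change wd (fun w => (1 + w * conj w) * wdb φ w + (k : ℂ) * w * φ w) z = _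
  simp (disch := fun_prop) only [wd_add, wd_mul, wd_id, wd_conj, wd_const, wd_const_mul_id]
  ring

lemma wd_wdb_DN : wd (wdb (DN k φ)) z =
    (k + 1) * (wdb φ z + z * wd (wdb φ) z) + conj z * wdb (wdb φ) z
      + (1 + z * conj z) * wd (wdb (wdb φ)) z := by
  have := hφ.differentiable (by simp)
  rw [show wdb (DN k φ) = _ from funext (wdb_DN hφ k)]
  simp (disch := fun_prop) only [wd_add, wd_mul, wd_id, wd_conj, wd_const, wd_const_mul_id]
  ring

lemma wdb_LN : wdb (LN k φ) z =
    -(2 * (1 + z * conj z) * z * wd (wdb φ) z + (1 + z * conj z) ^ 2 * wd (wdb (wdb φ)) z)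
      - k * z * (z * wd φ z + (1 + z * conj z) * wd (wdb φ) z)
      + k * ((1 + z * conj z) * wdb φ z + conj z * z * wdb φ z
        + conj z * (1 + z * conj z) * wdb (wdb φ) z)
      + k ^ 2 * (z * φ z + (1 + z * conj z) * wdb φ z) := by
  have := hφ.differentiable (by simp)
  have hL : LN k φ = fun w =>
      (-1 : ℂ) * ((1 + w * conj w) * ((1 + w * conj w) * wd (wdb φ) w))
        - (k : ℂ) * (w * ((1 + w * conj w) * wd φ w))
        + (k : ℂ) * (conj w * ((1 + w * conj w) * wdb φ w))
        + (k : ℂ) ^ 2 * ((1 + w * conj w) * φ w) := by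
    ext w
    simp only [LN]
    ring
  rw [hL]
  simp (disch := fun_prop) only [wdb_add, wdb_sub, wdb_mul, wdb_id, wdb_conj, wdb_const]
  rw [wdb_wd_comm (hφ.of_le ENat.LEInfty.out).contDiffAt,
    wdb_wd_comm ((contDiff_wdb hφ).of_le ENat.LEInfty.out).contDiffAt]
  ring

lemma LN_succ_DN : LN (k + 1) (DN k φ) z = DN k (LN k φ) z := by
  rw [LN, wd_wdb_DN hφ, wd_DN hφ, wdb_DN hφ]
  simp only [DN]
  rw [wdb_LN hφ]
  simp only [LN]
  push_cast
  ring

end Intertwining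

lemma LN_zero (ψ : ℂ → ℂ) : LN 0 ψ = L0 ψ := by
  ext z
  simp [LN, L0]

lemma LN_lowerChain {ψ : ℂ → ℂ} (hψ : ContDiff ℝ ∞ ψ) (n : ℕ) :
    LN n (lowerChain n ψ) = lowerChain n (L0 ψ) := by
  induction n with
  | zero =>
    rw [Nat.cast_zero]
    exact LN_zero ψ
  | succ n ih =>
    ext z
    rw [Nat.cast_succ]
    exact (LN_succ_DN (contDiff_lowerChain hψ n) n z).trans (congrArg (DN n · z) ih)

lemma DN_sub_const_mul {f g : ℂ → ℂ} {z : ℂ} (k : ℝ) (c : ℂ) (hf : DifferentiableAt ℝ f z)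
    (hg : DifferentiableAt ℝ g z) :
    DN k (fun w => f w - c * g w) z = DN k f z - c * DN k g z := by
  simp only [DN, wdb_sub hf (hg.const_mul c), wdb_mul (differentiableAt_const c) hg, wdb_const]
  ring

lemma lowerChain_sub_const_mul {f g : ℂ → ℂ} (hf : ContDiff ℝ ∞ f) (hg : ContDiff ℝ ∞ g)
    (c : ℂ) (n : ℕ) :
    lowerChain n (fun w => f w - c * g w) = fun w => lowerChain n f w - c * lowerChain n g w := by
  induction n with
  | zero => rfl
  | succ n ih =>
    ext z
    change DN n (lowerChain n _) z = _
    rw [ih]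
    exact DN_sub_const_mul n c ((contDiff_lowerChain hf n).differentiable (by simp) z)
      ((contDiff_lowerChain hg n).differentiable (by simp) z)

theorem monopole_intertwined_with_laplacian_general
    (N : ℕ) (ψ : ℂ → ℂ) (hψ : ContDiff ℝ (⊤ : ℕ∞) ψ) :
    ∀ z : ℂ,
      LN (N : ℝ) (lowerChain N ψ) z = lowerChain N (fun w => L0 ψ w) z ∧
      LN (N : ℝ) (lowerChain N ψ) z - (N : ℂ)^2 * lowerChain N ψ z
        = lowerChain N (fun w => L0 ψ w - (N : ℂ)^2 * ψ w) z := by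
  intro z
  have hL : LN N (lowerChain N ψ) z = lowerChain N (L0 ψ) z := congrFun (LN_lowerChain hψ N) z
  refine ⟨hL, ?_⟩
  rw [hL, lowerChain_sub_const_mul (contDiff_L0 hψ) hψ]

/-- with D = D_{N-1}∘···∘D₀ one has L_N(Dψ) = D(L₀ψ); hence
H_{2N}∘D = D∘(L₀ - N²) for the monopole Hamiltonian H_{2N} = L_N - N². -/
theorem monopole_intertwined_with_laplacian
    (N : ℕ) (hN : 1 ≤ N) (ψ : ℂ → ℂ) (hψ : ContDiff ℝ (⊤ : ℕ∞) ψ) :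
    ∀ z : ℂ,
      LN (N : ℝ) (lowerChain N ψ) z = lowerChain N (fun w => L0 ψ w) z ∧
      LN (N : ℝ) (lowerChain N ψ) z - (N : ℂ)^2 * lowerChain N ψ z
        = lowerChain N (fun w => L0 ψ w - (N : ℂ)^2 * ψ w) z :=
  monopole_intertwined_with_laplacian_general N ψ hψ
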